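/- arXiv:2212.11647 — 3 statements merged into one kernel-verified Lean document; each statement's English description precedes it below -/
import Mathlib

section
/- Consider a sequence of legal rotor-router moves on a 4-regular graph G. For a directed edge (x,y), let N(x,y) be the number of times a particle was routed from x to y, and let θ(x,y) = N(x,y) − N(y,x) be the net crossing number. Let u(x) = δ^β · ∑_{y∼x} N(x,y) be the (rescaled) odometer, for a fixed scale factor δ^β > 0. If |N(x,y) − N(x,z)| ≤ 1 for all y, z ∼ x (the rotor mechanism property), then for every directed edge (x,y), the gradient ∇u(x,y) := δ^{-β/2}(u(y) − u(x)) satisfies ∇u(x,y) = δ^{β/2}(−4θ(x,y) + ρ(x,y)) for some function ρ on directed edges with |ρ(x,y)| ≤ 6 for all edges. -/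
open Finset

theorem Finset.abs_sum_sub_card_mul_le {ι R : Type*} [DecidableEq ι] [CommRing R] [LinearOrder R]
    [IsOrderedRing R] {s : Finset ι} {f : ι → R} {c : R} {y : ι} (hy : y ∈ s)
    (hf : ∀ z ∈ s, |f z - f y| ≤ c) :
    |∑ z ∈ s, f z - #s * f y| ≤ (#s - 1) * c := by
  have hsplit : ∑ z ∈ s, f z - #s * f y = ∑ z ∈ s.erase y, (f z - f y) := by
    rw [← add_sum_erase s f hy, ← card_erase_add_one hy, sum_sub_distrib, sum_const,
      nsmul_eq_mul]
    push_cast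
    ring
  calc |∑ z ∈ s, f z - #s * f y|
      ≤ ∑ z ∈ s.erase y, |f z - f y| := hsplit ▸ abs_sum_le_sum_abs _ _
    _ ≤ ∑ _z ∈ s.erase y, c := sum_le_sum fun z hz => hf z (mem_of_mem_erase hz)
    _ = (#s - 1) * c := by
        rw [sum_const, card_erase_of_mem hy, nsmul_eq_mul,
          Nat.cast_sub (card_pos.mpr ⟨y, hy⟩), Nat.cast_one]

/-- Rotor-router gradient identity: if `N` counts routings along directed edges of a
4-regular graph and at each vertex the counts to the four neighbors differ by at most 1,
then with `u x = δ^β ∑_{y∼x} N x y` and `θ x y = N x y − N y x`, for every directed edge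
∇u(x,y) = δ^{-β/2}(u y − u x) = δ^{β/2}(−4θ(x,y) + ρ(x,y)) with |ρ| ≤ 6. -/
theorem rotor_gradient_identity {V : Type*} (nbr : V → Finset V)
    (hreg : ∀ x, (nbr x).card = 4)
    (hsym : ∀ x y, y ∈ nbr x → x ∈ nbr y)
    (N : V → V → ℕ)
    (hrotor : ∀ x, ∀ y ∈ nbr x, ∀ z ∈ nbr x, |(N x y : ℤ) - (N x z : ℤ)| ≤ 1)
    (δ β : ℝ) (hδ : 0 < δ) :
    ∃ ρ : V → V → ℝ, (∀ x, ∀ y ∈ nbr x, |ρ x y| ≤ 6) ∧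
      ∀ x, ∀ y ∈ nbr x,
        δ ^ (-(β / 2)) *
            ((δ ^ β * ∑ z ∈ nbr y, (N y z : ℝ)) - (δ ^ β * ∑ z ∈ nbr x, (N x z : ℝ)))
          = δ ^ (β / 2) * (-4 * ((N x y : ℝ) - (N y x : ℝ)) + ρ x y) := by
  classical
  have hvertex : ∀ x, ∀ y ∈ nbr x, |∑ z ∈ nbr x, (N x z : ℝ) - 4 * N x y| ≤ 3 := by
    intro x y hy
    have hclose : ∀ z ∈ nbr x, |(N x z : ℝ) - N x y| ≤ 1 := fun z hz => by
      exact_mod_cast hrotor x z hz y hy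
    simpa [hreg x, show ((4 : ℝ) - 1) * 1 = 3 by norm_num]
      using abs_sum_sub_card_mul_le hy hclose
  have hscale : δ ^ (-(β / 2)) * δ ^ β = δ ^ (β / 2) := by
    rw [← Real.rpow_add hδ]
    ring_nf
  refine ⟨fun x y => (∑ z ∈ nbr y, (N y z : ℝ) - 4 * N y x)
      - (∑ z ∈ nbr x, (N x z : ℝ) - 4 * N x y), fun x y hy => ?_, fun x y _ => ?_⟩
  · calc _ ≤ (3 : ℝ) + 3 :=
          (abs_sub _ _).trans (add_le_add (hvertex y x (hsym x y hy)) (hvertex x y hy))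
      _ = 6 := by norm_num
  · rw [← hscale]
    ring
end

section
/- Let u, ũ be the divisible sandpile odometer functions on a graph G with rescaled Laplacian Δₙ, started respectively from a bounded finitely supported density σ (with 0 ≤ σ ≤ M) and from its k-step smoothing S_k σ, where S_1 f = f + (δ^β/2) Δₙ f and S_k = (S_1)^k. Then |u(x) − ũ(x)| ≤ (1/2) k M δ^β for all vertices x. -/
/-!
The smoothing iteration is the explicit Euler scheme for `∂ₜ f = Δₙ f` with step `δ^β/2`, so it
telescopes to `S_k σ = σ + Δₙ w` with `w = (δ^β/2) ∑_{j<k} S_j σ`. Each step replaces a value by a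
convex combination of itself and its neighbour average, so `0 ≤ S_j σ ≤ M` and hence
`0 ≤ w ≤ kMδ^β/2`. Then `ũ + w` is admissible for `σ`, and `u - w + kMδ^β/2` is admissible for
`S_k σ` because `Δₙ` kills constants; the least action principle gives both inequalities.
-/

open Finset

section

variable {V : Type*}

def IsOdometer (L : (V → ℝ) → V → ℝ) (ρ u : V → ℝ) : Prop :=
  (∀ x, 0 ≤ u x) ∧ (∀ x, ρ x + L u x ≤ 1) ∧
    ∀ v : V → ℝ, (∀ x, 0 ≤ v x) → (∀ x, ρ x + L v x ≤ 1) → ∀ x, u x ≤ v x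

namespace IsOdometer

variable {F : Type*} [FunLike F (V → ℝ) (V → ℝ)] [AddMonoidHomClass F (V → ℝ) (V → ℝ)]
  {L : F} {ρ u ũ w : V → ℝ} {c : ℝ}

theorem le_add (hu : IsOdometer L ρ u) (hũ : IsOdometer L (ρ + L w) ũ) (hw : ∀ x, 0 ≤ w x) :
    ∀ x, u x ≤ ũ x + w x := by
  refine hu.2.2 (ũ + w) (fun x => add_nonneg (hũ.1 x) (hw x)) fun x => ?_
  have hũx := hũ.2.1 x
  simp only [map_add, Pi.add_apply] at hũx ⊢
  linarith

theorem le_sub_add_const (hu : IsOdometer L ρ u) (hũ : IsOdometer L (ρ + L w) ũ)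
    (hconst : L (fun _ => c) = 0) (hw : ∀ x, w x ≤ c) : ∀ x, ũ x ≤ u x - w x + c := by
  have hnonneg : ∀ x, 0 ≤ u x - w x + c := fun x => by linarith [hu.1 x, hw x]
  refine hũ.2.2 (u - w + fun _ => c) hnonneg fun x => ?_
  have hux := hu.2.1 x
  simp only [map_add, map_sub, hconst, Pi.add_apply, Pi.sub_apply, Pi.zero_apply] at hux ⊢
  linarith

theorem abs_sub_le (hu : IsOdometer L ρ u) (hũ : IsOdometer L (ρ + L w) ũ)
    (hconst : L (fun _ => c) = 0) (hw : ∀ x, w x ∈ Set.Icc 0 c) (x : V) :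
    |u x - ũ x| ≤ c := by
  have hle := hu.le_add hũ (fun x => (hw x).1) x
  have hge := hu.le_sub_add_const hũ hconst (fun x => (hw x).2) x
  rw [abs_sub_le_iff]
  constructor <;> linarith [(hw x).1, (hw x).2]

end IsOdometer

theorem eq_add_map_smul_sum_range {R E : Type*} [Semiring R] [AddCommMonoid E] [Module R E]
    (L : E →ₗ[R] E) (h : R) {S : ℕ → E} (hS : ∀ j, S (j + 1) = S j + h • L (S j)) (k : ℕ) :
    S k = S 0 + L (h • ∑ j ∈ range k, S j) := by
  induction k with
  | zero => simp
  | succ k ih => rw [hS, sum_range_succ, smul_add, map_add, ← add_assoc, ← ih, map_smul]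

/-- `s` times the random-walk Laplacian of a graph in which every vertex `x` has the `d`
neighbours `nbr x`; the paper's `Δₙ` is the case `d = 4`, `s = δ^(-β)`. -/
noncomputable def scaledLaplacian (nbr : V → Finset V) (d : ℕ) (s : ℝ) :
    (V → ℝ) →ₗ[ℝ] (V → ℝ) where
  toFun f x := s * ((d : ℝ)⁻¹ * ∑ y ∈ nbr x, f y - f x)
  map_add' f g := by
    ext x
    simp only [Pi.add_apply, sum_add_distrib]
    ring
  map_smul' a f := by
    ext x
    simp only [Pi.smul_apply, smul_eq_mul, ← mul_sum, RingHom.id_apply]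
    ring

namespace scaledLaplacian

variable {nbr : V → Finset V} {d : ℕ} {s : ℝ}

theorem _root_.scaledLaplacian_apply (f : V → ℝ) (x : V) :
    scaledLaplacian nbr d s f x = s * ((d : ℝ)⁻¹ * ∑ y ∈ nbr x, f y - f x) := rfl

theorem map_const (hreg : ∀ x, (nbr x).card = d) (hd : d ≠ 0) (c : ℝ) :
    scaledLaplacian nbr d s (fun _ => c) = 0 := by
  ext x
  have hd' : (d : ℝ) ≠ 0 := Nat.cast_ne_zero.mpr hd
  simp [scaledLaplacian_apply, hreg x, hd']

theorem average_mem {C : Set ℝ} (hC : Convex ℝ C) (hreg : ∀ x, (nbr x).card = d) (hd : d ≠ 0)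
    {f : V → ℝ} (hf : ∀ x, f x ∈ C) (x : V) : (d : ℝ)⁻¹ * ∑ y ∈ nbr x, f y ∈ C := by
  have hd' : (d : ℝ) ≠ 0 := Nat.cast_ne_zero.mpr hd
  rw [mul_sum]
  exact hC.sum_mem (fun _ _ => by positivity) (by simp [hreg x, hd']) fun y _ => hf y

/-- For `0 ≤ h * s ≤ 1` the step is a convex combination of `f x` and its neighbour average. -/
theorem add_smul_mem {C : Set ℝ} (hC : Convex ℝ C) (hreg : ∀ x, (nbr x).card = d) (hd : d ≠ 0)
    {h : ℝ} (hh₀ : 0 ≤ h * s) (hh₁ : h * s ≤ 1) {f : V → ℝ} (hf : ∀ x, f x ∈ C) (x : V) :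
    (f + h • scaledLaplacian nbr d s f) x ∈ C := by
  have hconvex := hC (hf x) (average_mem hC hreg hd hf x) (by linarith) hh₀ (sub_add_cancel 1 _)
  convert hconvex using 1
  simp only [Pi.add_apply, Pi.smul_apply, smul_eq_mul, scaledLaplacian_apply]
  ring

theorem iterate_mem {C : Set ℝ} (hC : Convex ℝ C) (hreg : ∀ x, (nbr x).card = d) (hd : d ≠ 0)
    {h : ℝ} (hh₀ : 0 ≤ h * s) (hh₁ : h * s ≤ 1) {S : ℕ → V → ℝ}
    (hS : ∀ j, S (j + 1) = S j + h • scaledLaplacian nbr d s (S j)) (hS₀ : ∀ x, S 0 x ∈ C)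
    (j : ℕ) : ∀ x, S j x ∈ C := by
  induction j with
  | zero => exact hS₀
  | succ j ih => exact hS j ▸ add_smul_mem hC hreg hd hh₀ hh₁ ih

end scaledLaplacian

theorem smul_sum_range_apply_mem_Icc {S : ℕ → V → ℝ} {M h : ℝ} (hh : 0 ≤ h)
    (hS : ∀ j x, S j x ∈ Set.Icc 0 M) (k : ℕ) (x : V) :
    (h • ∑ j ∈ range k, S j) x ∈ Set.Icc 0 (h * k * M) := by
  have hsum₀ := sum_nonneg fun j (_ : j ∈ range k) => (hS j x).1
  have hsumM := sum_le_card_nsmul (range k) (S · x) M fun j _ => (hS j x).2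
  rw [card_range, nsmul_eq_mul] at hsumM
  simp only [Pi.smul_apply, Finset.sum_apply, smul_eq_mul]
  exact ⟨mul_nonneg hh hsum₀, by rw [mul_assoc]; exact mul_le_mul_of_nonneg_left hsumM hh⟩

end

theorem sandpile_odometer_smoothing_error_general {V : Type*} (nbr : V → Finset V)
    (hreg : ∀ x, (nbr x).card = 4)
    (δ β M : ℝ) (hδ : 0 < δ)
    (L : (V → ℝ) → V → ℝ)
    (hL : ∀ f x, L f x = δ ^ (-β) * ((1 / 4) * ∑ y ∈ nbr x, f y - f x))
    (σ : V → ℝ)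
    (hσ0 : ∀ x, 0 ≤ σ x) (hσM : ∀ x, σ x ≤ M)
    (S : ℕ → V → ℝ) (hS0 : S 0 = σ)
    (hSsucc : ∀ j x, S (j + 1) x = S j x + (δ ^ β / 2) * L (S j) x)
    (k : ℕ) (u utilde : V → ℝ)
    (hu : (∀ x, 0 ≤ u x) ∧ (∀ x, σ x + L u x ≤ 1) ∧
      ∀ v : V → ℝ, (∀ x, 0 ≤ v x) → (∀ x, σ x + L v x ≤ 1) → ∀ x, u x ≤ v x)
    (hut : (∀ x, 0 ≤ utilde x) ∧ (∀ x, S k x + L utilde x ≤ 1) ∧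
      ∀ v : V → ℝ, (∀ x, 0 ≤ v x) → (∀ x, S k x + L v x ≤ 1) → ∀ x, utilde x ≤ v x) :
    ∀ x, |u x - utilde x| ≤ (1 / 2) * k * M * δ ^ β := by
  set Δ := scaledLaplacian nbr 4 (δ ^ (-β))
  obtain rfl : L = Δ := funext fun f => funext fun x => by
    rw [hL, scaledLaplacian_apply]; norm_num
  have hstep_size : δ ^ β / 2 * δ ^ (-β) = 1 / 2 := by
    rw [Real.rpow_neg hδ.le, div_mul_eq_mul_div, mul_inv_cancel₀ (Real.rpow_pos_of_pos hδ β).ne']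
  have hstep : ∀ j, S (j + 1) = S j + (δ ^ β / 2) • Δ (S j) := fun j => funext (hSsucc j)
  have hS_mem := scaledLaplacian.iterate_mem (convex_Icc 0 M) hreg four_ne_zero
    (by linarith) (by linarith) hstep (hS0 ▸ fun x => ⟨hσ0 x, hσM x⟩)
  have hw := smul_sum_range_apply_mem_Icc (h := δ ^ β / 2) (by positivity) hS_mem k
  rw [eq_add_map_smul_sum_range Δ _ hstep k, hS0] at hut
  intro x
  calc |u x - utilde x| ≤ δ ^ β / 2 * k * M :=
        IsOdometer.abs_sub_le hu hut (scaledLaplacian.map_const hreg four_ne_zero _) hw x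
    _ = (1 / 2) * k * M * δ ^ β := by ring

/-- Smoothing error for sandpile odometers: if `u` and `ũ` are the divisible sandpile
odometers (least action principle) for initial densities `σ` and `S_k σ` respectively,
where `S` is the iterated smoothing `S_{j+1} f = S_j f + (δ^β/2) Δₙ (S_j f)` and
`0 ≤ σ ≤ M`, then `|u − ũ| ≤ (1/2) k M δ^β` everywhere. -/
theorem sandpile_odometer_smoothing_error {V : Type*} (nbr : V → Finset V)
    (hreg : ∀ x, (nbr x).card = 4)
    (δ β M : ℝ) (hδ : 0 < δ) (hM : 0 ≤ M)
    (L : (V → ℝ) → V → ℝ)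
    (hL : ∀ f x, L f x = δ ^ (-β) * ((1 / 4) * ∑ y ∈ nbr x, f y - f x))
    (σ : V → ℝ) (hσfin : (Function.support σ).Finite)
    (hσ0 : ∀ x, 0 ≤ σ x) (hσM : ∀ x, σ x ≤ M)
    (S : ℕ → V → ℝ) (hS0 : S 0 = σ)
    (hSsucc : ∀ j x, S (j + 1) x = S j x + (δ ^ β / 2) * L (S j) x)
    (k : ℕ) (u utilde : V → ℝ)
    (hu : (∀ x, 0 ≤ u x) ∧ (∀ x, σ x + L u x ≤ 1) ∧
      ∀ v : V → ℝ, (∀ x, 0 ≤ v x) → (∀ x, σ x + L v x ≤ 1) → ∀ x, u x ≤ v x)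
    (hut : (∀ x, 0 ≤ utilde x) ∧ (∀ x, S k x + L utilde x ≤ 1) ∧
      ∀ v : V → ℝ, (∀ x, 0 ≤ v x) → (∀ x, S k x + L v x ≤ 1) → ∀ x, utilde x ≤ v x) :
    ∀ x, |u x - utilde x| ≤ (1 / 2) * k * M * δ ^ β :=
  sandpile_odometer_smoothing_error_general nbr hreg δ β M hδ L hL σ hσ0 hσM S hS0 hSsucc k u utilde
    hu hut
end

section
/- Let f: T → ℝ on a finite graph ball (the sandpile odometer restriction) satisfy: f ≥ 0, |Δf| ≤ K on B(y, 2k) for a vertex y with f(y) = 0, where Δ is the graph Laplacian, and suppose φ(z) := E_y[τ] − E_z[τ] (τ the exit time of B(y,2k)) satisfies Δφ = 1 on B(y,2k), 0 ≤ φ ≤ c(2k)^β on B(y,2k), and the elliptic Harnack inequality holds with constant c'' for nonnegative harmonic functions on B(y,2k). Then f(z) ≤ c'' · c · 2^{β+1} · K · k^β for all z ∈ B(y,k). -/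
/-!
Since `Δφ = 1` and `|Δf| ≤ K`, the function `f + Kφ` is subharmonic and `f - Kφ` superharmonic
on the ball. Let `h` be harmonic with the boundary values of `f + Kφ`. The maximum principle gives
`f ≤ f + Kφ ≤ h ≤ f - Kφ + 2Kc(2k)^β` and `h ≥ 0`, so `h(y) ≤ 2Kc(2k)^β` as `f(y) = φ(y) = 0`,
and Harnack carries this bound from `y` to all of `B(y,k)`. The maximum principle needs no
connectivity of the graph: a nonempty set closed under taking neighbours contains a maximum of
`φ`, where `Δφ ≤ 0`, contradicting `Δφ > 0`.
-/

open Finset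

section GraphLaplacian

variable {V : Type*} (nbr : V → Finset V)

/-- Unnormalised: on a `d`-regular graph it is `d` times the averaged Laplacian
`(1/d) ∑_{w ~ z} u w - u z` of the statement. -/
def graphLaplacian : (V → ℝ) →ₗ[ℝ] V → ℝ :=
  LinearMap.pi fun z => ∑ w ∈ nbr z, (LinearMap.proj (R := ℝ) (φ := fun _ : V => ℝ) w -
    LinearMap.proj z)

theorem graphLaplacian_apply (u : V → ℝ) (z : V) :
    graphLaplacian nbr u z = ∑ w ∈ nbr z, (u w - u z) := by
  simp [graphLaplacian]

@[simp]
theorem graphLaplacian_const (a : ℝ) : graphLaplacian nbr (fun _ => a) = 0 := by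
  ext z
  simp [graphLaplacian_apply]

theorem graphLaplacian_eq_mul_avg_sub {d : ℕ} {z : V} (hd : (nbr z).card = d) (u : V → ℝ) :
    graphLaplacian nbr u z = d * (1 / d * ∑ w ∈ nbr z, u w - u z) := by
  rw [graphLaplacian_apply, sum_sub_distrib, sum_const, hd, nsmul_eq_mul]
  obtain rfl | hd0 := eq_or_ne d 0
  · simp [card_eq_zero.mp hd]
  · field_simp

theorem exists_graphLaplacian_nonpos_of_nbr_subset {S : Finset V} (hS : S.Nonempty)
    (hclosed : ∀ z ∈ S, nbr z ⊆ S) (ψ : V → ℝ) :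
    ∃ z ∈ S, graphLaplacian nbr ψ z ≤ 0 := by
  obtain ⟨z, hz, hmax⟩ := S.exists_max_image ψ hS
  refine ⟨z, hz, ?_⟩
  rw [graphLaplacian_apply]
  exact sum_nonpos fun w hw => sub_nonpos.mpr (hmax w (hclosed z hz hw))

theorem eq_of_graphLaplacian_nonneg_of_le {v : V → ℝ} {z : V}
    (hmax : ∀ w ∈ nbr z, v w ≤ v z) (hv : 0 ≤ graphLaplacian nbr v z) : ∀ w ∈ nbr z, v w = v z := by
  rw [graphLaplacian_apply] at hv
  have hnonpos : ∀ w ∈ nbr z, v w - v z ≤ 0 := fun w hw => sub_nonpos.mpr (hmax w hw)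
  have hsum := le_antisymm (sum_nonpos hnonpos) hv
  exact fun w hw => sub_eq_zero.mp ((sum_eq_zero_iff_of_nonpos hnonpos).mp hsum w hw)

theorem nonpos_of_graphLaplacian_nonneg {B : Finset V} {ψ v : V → ℝ}
    (hψ : ∀ z ∈ B, nbr z ⊆ B → 0 < graphLaplacian nbr ψ z)
    (hv : ∀ z ∈ B, nbr z ⊆ B → 0 ≤ graphLaplacian nbr v z)
    (hbd : ∀ z ∈ B, ¬ nbr z ⊆ B → v z ≤ 0) : ∀ z ∈ B, v z ≤ 0 := by
  classical
  by_contra! hpos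
  obtain ⟨z₀, hz₀, hvz₀⟩ := hpos
  obtain ⟨m, hm, hmax⟩ := B.exists_max_image v ⟨z₀, hz₀⟩
  set S := B.filter fun z => v z = v m
  have hint : ∀ z ∈ S, nbr z ⊆ B := fun z hz => by
    rw [mem_filter] at hz
    by_contra hn
    linarith [hbd z hz.1 hn, hmax z₀ hz₀]
  have hclosed : ∀ z ∈ S, nbr z ⊆ S := by
    intro z hz w hw
    obtain ⟨hzB, hzm⟩ := mem_filter.mp hz
    have hwz := eq_of_graphLaplacian_nonneg_of_le nbr
      (fun w hw => hzm ▸ hmax w (hint z hz hw)) (hv z hzB (hint z hz)) w hw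
    exact mem_filter.mpr ⟨hint z hz hw, hwz.trans hzm⟩
  obtain ⟨z, hz, hlap⟩ := exists_graphLaplacian_nonpos_of_nbr_subset nbr (S := S)
    ⟨m, mem_filter.mpr ⟨hm, rfl⟩⟩ hclosed ψ
  exact (hψ z (mem_filter.mp hz).1 (hint z hz)).not_ge hlap

theorem le_of_graphLaplacian_le {B : Finset V} {ψ v w : V → ℝ}
    (hψ : ∀ z ∈ B, nbr z ⊆ B → 0 < graphLaplacian nbr ψ z)
    (hlap : ∀ z ∈ B, nbr z ⊆ B → graphLaplacian nbr w z ≤ graphLaplacian nbr v z)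
    (hbd : ∀ z ∈ B, ¬ nbr z ⊆ B → v z ≤ w z) : ∀ z ∈ B, v z ≤ w z := by
  have hdiff := nonpos_of_graphLaplacian_nonneg nbr (v := v - w) hψ
    (fun z hz hn => by simpa using hlap z hz hn) (fun z hz hn => by simpa using hbd z hz hn)
  exact fun z hz => sub_nonpos.mp (hdiff z hz)

theorem nonneg_of_graphLaplacian_eq_zero {B : Finset V} {ψ h : V → ℝ}
    (hψ : ∀ z ∈ B, nbr z ⊆ B → 0 < graphLaplacian nbr ψ z)
    (hh : ∀ z ∈ B, nbr z ⊆ B → graphLaplacian nbr h z = 0)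
    (hbd : ∀ z ∈ B, ¬ nbr z ⊆ B → 0 ≤ h z) : ∀ z ∈ B, 0 ≤ h z :=
  le_of_graphLaplacian_le nbr (v := 0) hψ (fun z hz hn => by simp [hh z hz hn]) hbd

theorem exists_harmonic_extension [Fintype V] {B : Finset V} {ψ : V → ℝ}
    (hψ : ∀ z ∈ B, nbr z ⊆ B → 0 < graphLaplacian nbr ψ z) (g : V → ℝ) :
    ∃ h : V → ℝ, (∀ z, ¬ (z ∈ B ∧ nbr z ⊆ B) → h z = g z) ∧
      ∀ z ∈ B, nbr z ⊆ B → graphLaplacian nbr h z = 0 := by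
  classical
  -- the maximum principle makes `L` injective, hence surjective
  let L : (V → ℝ) →ₗ[ℝ] V → ℝ := LinearMap.pi fun z =>
    if z ∈ B ∧ nbr z ⊆ B then LinearMap.proj z ∘ₗ graphLaplacian nbr else LinearMap.proj z
  have hL : ∀ u z, L u z = if z ∈ B ∧ nbr z ⊆ B then graphLaplacian nbr u z else u z := by
    intro u z
    simp only [L, LinearMap.pi_apply]
    split_ifs <;> rfl
  have hinj : Function.Injective L := by
    rw [← LinearMap.ker_eq_bot, LinearMap.ker_eq_bot']
    intro u hu
    have hu' : ∀ z, L u z = 0 := fun z => congrFun hu z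
    have hharm : ∀ z ∈ B, nbr z ⊆ B → graphLaplacian nbr u z = 0 := fun z hz hn => by
      simpa [hL, hz, hn] using hu' z
    have hbd : ∀ z, ¬ (z ∈ B ∧ nbr z ⊆ B) → u z = 0 := fun z hz => by
      simpa [hL, hz] using hu' z
    have hnonneg := nonneg_of_graphLaplacian_eq_zero nbr hψ hharm
      fun z hz hn => (hbd z fun h => hn h.2).ge
    have hnonpos := nonneg_of_graphLaplacian_eq_zero nbr (h := -u) hψ
      (fun z hz hn => by simp [hharm z hz hn]) fun z hz hn => by simp [hbd z fun h => hn h.2]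
    funext z
    by_cases hz : z ∈ B
    · exact le_antisymm (by simpa using hnonpos z hz) (hnonneg z hz)
    · exact hbd z fun h => hz h.1
  obtain ⟨h, hh⟩ := LinearMap.injective_iff_surjective.mp hinj
    fun z => if z ∈ B ∧ nbr z ⊆ B then 0 else g z
  refine ⟨h, fun z hz => ?_, fun z hz hn => ?_⟩
  · simpa [hL, hz] using congrFun hh z
  · simpa [hL, hz, hn] using congrFun hh z

section Sandwich

variable {B : Finset V} {K : ℝ} {f φ h : V → ℝ}

theorem add_mul_le_of_harmonic_extension
    (hφΔ : ∀ z ∈ B, nbr z ⊆ B → 0 < graphLaplacian nbr φ z)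
    (hfΔ : ∀ z ∈ B, nbr z ⊆ B → |graphLaplacian nbr f z| ≤ K * graphLaplacian nbr φ z)
    (hharm : ∀ z ∈ B, nbr z ⊆ B → graphLaplacian nbr h z = 0)
    (hbd : ∀ z, ¬ (z ∈ B ∧ nbr z ⊆ B) → h z = (f + K • φ) z) :
    ∀ z ∈ B, f z + K * φ z ≤ h z := by
  refine le_of_graphLaplacian_le nbr (v := f + K • φ) hφΔ (fun z hz hn => ?_) fun z hz hn => ?_
  · have hf := neg_le_of_abs_le (hfΔ z hz hn)
    simp only [map_add, map_smul, Pi.add_apply, Pi.smul_apply, smul_eq_mul, hharm z hz hn]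
    linarith
  · simp [hbd z fun h => hn h.2]

theorem le_sub_mul_add_of_harmonic_extension {C : ℝ} (hK : 0 ≤ K) (hφC : ∀ z ∈ B, φ z ≤ C)
    (hφΔ : ∀ z ∈ B, nbr z ⊆ B → 0 < graphLaplacian nbr φ z)
    (hfΔ : ∀ z ∈ B, nbr z ⊆ B → |graphLaplacian nbr f z| ≤ K * graphLaplacian nbr φ z)
    (hharm : ∀ z ∈ B, nbr z ⊆ B → graphLaplacian nbr h z = 0)
    (hbd : ∀ z, ¬ (z ∈ B ∧ nbr z ⊆ B) → h z = (f + K • φ) z) :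
    ∀ z ∈ B, h z ≤ f z - K * φ z + 2 * K * C := by
  refine le_of_graphLaplacian_le nbr (w := f - K • φ + fun _ => 2 * K * C) hφΔ
    (fun z hz hn => ?_) fun z hz hn => ?_
  · have hf := le_of_abs_le (hfΔ z hz hn)
    simp only [map_add, map_sub, map_smul, graphLaplacian_const, Pi.add_apply, Pi.sub_apply,
      Pi.smul_apply, smul_eq_mul, Pi.zero_apply, hharm z hz hn]
    linarith
  · have hKφ := mul_le_mul_of_nonneg_left (hφC z hz) hK
    simp only [hbd z fun h => hn h.2, Pi.add_apply, Pi.sub_apply, Pi.smul_apply, smul_eq_mul]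
    linarith

end Sandwich

end GraphLaplacian

theorem odometer_growth_bound_general {V : Type*} [Fintype V] (nbr : V → Finset V)
    (hreg : ∀ x, (nbr x).card = 4)
    (B1 B2 : Finset V) (y : V) (hy : y ∈ B1)
    (hsub : ∀ z ∈ B1, z ∈ B2 ∧ nbr z ⊆ B2)
    (k : ℕ) (K c c'' β : ℝ) (hK : 0 ≤ K) (hc'' : 0 ≤ c'')
    (f φ : V → ℝ)
    (hf0 : ∀ z, 0 ≤ f z) (hfy : f y = 0)
    (hfΔ : ∀ z, z ∈ B2 → nbr z ⊆ B2 → |(1 / 4) * ∑ w ∈ nbr z, f w - f z| ≤ K)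
    (hφΔ : ∀ z, z ∈ B2 → nbr z ⊆ B2 → (1 / 4) * ∑ w ∈ nbr z, φ w - φ z = 1)
    (hφy : φ y = 0)
    (hφ : ∀ z ∈ B2, 0 ≤ φ z ∧ φ z ≤ c * (2 * (k : ℝ)) ^ β)
    (harnack : ∀ h : V → ℝ, (∀ z ∈ B2, 0 ≤ h z) →
      (∀ z, z ∈ B2 → nbr z ⊆ B2 → (1 / 4) * ∑ w ∈ nbr z, h w - h z = 0) →
      ∀ z ∈ B1, ∀ w ∈ B1, h z ≤ c'' * h w) :
    ∀ z ∈ B1, f z ≤ c'' * c * 2 ^ (β + 1) * K * (k : ℝ) ^ β := by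
  have hlap : ∀ u z, graphLaplacian nbr u z = 4 * (1 / 4 * ∑ w ∈ nbr z, u w - u z) :=
    fun u z => by exact_mod_cast graphLaplacian_eq_mul_avg_sub nbr (hreg z) u
  have hφΔ' : ∀ z ∈ B2, nbr z ⊆ B2 → graphLaplacian nbr φ z = 4 := fun z hz hn => by
    rw [hlap, hφΔ z hz hn, mul_one]
  have hφpos : ∀ z ∈ B2, nbr z ⊆ B2 → 0 < graphLaplacian nbr φ z :=
    fun z hz hn => (hφΔ' z hz hn).symm ▸ four_pos
  have hfΔ' : ∀ z ∈ B2, nbr z ⊆ B2 → |graphLaplacian nbr f z| ≤ K * graphLaplacian nbr φ z :=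
    fun z hz hn => by
      rw [hlap, hφΔ' z hz hn, abs_mul, abs_of_pos four_pos]
      linarith [hfΔ z hz hn]
  obtain ⟨h, hbd, hharm⟩ := exists_harmonic_extension nbr hφpos (f + K • φ)
  have hh0 : ∀ z ∈ B2, 0 ≤ h z := nonneg_of_graphLaplacian_eq_zero nbr hφpos hharm
    fun z hz hn => (hbd z fun h => hn h.2).symm ▸ add_nonneg (hf0 z) (mul_nonneg hK (hφ z hz).1)
  have hhy : h y ≤ 2 * K * (c * (2 * k) ^ β) := by
    simpa [hfy, hφy] using le_sub_mul_add_of_harmonic_extension nbr hK (fun z hz => (hφ z hz).2)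
      hφpos hfΔ' hharm hbd y (hsub y hy).1
  intro z hz
  have hzB2 := (hsub z hz).1
  calc f z ≤ f z + K * φ z := le_add_of_nonneg_right (mul_nonneg hK (hφ z hzB2).1)
    _ ≤ h z := add_mul_le_of_harmonic_extension nbr hφpos hfΔ' hharm hbd z hzB2
    _ ≤ c'' * h y := harnack h hh0 (fun w hw hn => by linarith [hlap h w, hharm w hw hn]) z hz y hy
    _ ≤ c'' * (2 * K * (c * (2 * k) ^ β)) := mul_le_mul_of_nonneg_left hhy hc''
    _ = c'' * c * 2 ^ (β + 1) * K * (k : ℝ) ^ β := by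
      rw [Real.mul_rpow zero_le_two k.cast_nonneg, Real.rpow_add two_pos, Real.rpow_one]
      ring

/-- Odometer growth bound via the maximum principle and Harnack inequality: if `f ≥ 0`
vanishes at `y`, `|Δf| ≤ K` on the interior of `B2 = B(y,2k)`, `φ` has `Δφ = 1` there
with `0 ≤ φ ≤ c(2k)^β` and `φ(y) = 0`, and the elliptic Harnack inequality holds with
constant `c''` on `B1 = B(y,k)`, then `f(z) ≤ c'' c 2^{β+1} K k^β` for all `z ∈ B1`. -/
theorem odometer_growth_bound {V : Type*} [Fintype V] (nbr : V → Finset V)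
    (hreg : ∀ x, (nbr x).card = 4)
    (B1 B2 : Finset V) (y : V) (hy : y ∈ B1)
    (hsub : ∀ z ∈ B1, z ∈ B2 ∧ nbr z ⊆ B2)
    (k : ℕ) (hk : 1 ≤ k) (K c c'' β : ℝ) (hK : 0 ≤ K) (hc : 0 ≤ c) (hc'' : 0 ≤ c'')
    (f φ : V → ℝ)
    (hf0 : ∀ z, 0 ≤ f z) (hfy : f y = 0)
    (hfΔ : ∀ z, z ∈ B2 → nbr z ⊆ B2 → |(1 / 4) * ∑ w ∈ nbr z, f w - f z| ≤ K)
    (hφΔ : ∀ z, z ∈ B2 → nbr z ⊆ B2 → (1 / 4) * ∑ w ∈ nbr z, φ w - φ z = 1)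
    (hφy : φ y = 0)
    (hφ : ∀ z ∈ B2, 0 ≤ φ z ∧ φ z ≤ c * (2 * (k : ℝ)) ^ β)
    (harnack : ∀ h : V → ℝ, (∀ z ∈ B2, 0 ≤ h z) →
      (∀ z, z ∈ B2 → nbr z ⊆ B2 → (1 / 4) * ∑ w ∈ nbr z, h w - h z = 0) →
      ∀ z ∈ B1, ∀ w ∈ B1, h z ≤ c'' * h w) :
    ∀ z ∈ B1, f z ≤ c'' * c * 2 ^ (β + 1) * K * (k : ℝ) ^ β :=
  odometer_growth_bound_general nbr hreg B1 B2 y hy hsub k K c c'' β hK hc'' f φ hf0 hfy hfΔ hφΔ hφy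
    hφ harnack
end
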